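/- Let N, D, K be positive natural numbers, let A be a real N×N matrix, let ε₁,…,ε_K be real numbers, and let W⁽¹⁾,…,W⁽ᴷ⁾ be real D×D matrices. For an input X ∈ ℝ^{N×D} define H⁽⁰⁾ = X and H⁽ᵏ⁾ = σ((ε_k·I_N + A)·H⁽ᵏ⁻¹⁾·W⁽ᵏ⁾) with σ the entrywise ReLU, and define the mean-READOUT graph representation h_G = (H⁽ᴷ⁾)ᵀ·φ_mean ∈ ℝ^D, where φ_mean = (1/N,…,1/N)ᵀ ∈ ℝ^N. Then h_G = Σ_{i=1}^{ND} ⟨b_i(X), vec(X)⟩ · b̃_i, where b̃_i ∈ ℝ^D is the i-th column of the fixed matrix I_D ⊗ φ_meanᵀ, which is independent of the input X, while b_i(X) is the i-th column of the input-dependent encoder matrix E⁽¹⁾·Σ⁽¹⁾(X) ⋯ E⁽ᴷ⁾·Σ⁽ᴷ⁾(X) with E⁽ᵏ⁾ = W⁽ᵏ⁾ ⊗ (ε_k·I_N + Aᵀ) and Σ⁽ᵏ⁾(X) the 0/1 diagonal ReLU activation-pattern matrices of layer k. In particular, the mean READOUT generates a decoder with fixed constant bases b̃_i that do not depend on the input.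 -/

import Mathlib

open Matrix Kronecker

/-!
Vectorizing a GIN layer turns the pre-activation `(ε I + A) H W` into
`vec H ᵥ* (W ⊗ₖ (ε I + Aᵀ))` and the ReLU into right multiplication by the diagonal 0/1
pattern of the pre-activation, so `vec H⁽ᴷ⁾ = vec X ᵥ* E⁽¹⁾Σ⁽¹⁾ ⋯ E⁽ᴷ⁾Σ⁽ᴷ⁾`. The mean readout
is linear in `vec H⁽ᴷ⁾` with a matrix that does not see the layers:
`vec (φᵀ H⁽ᴷ⁾) = (I ⊗ₖ φᵀ) *ᵥ vec H⁽ᴷ⁾`, and its columns are the fixed bases `b̃ᵢ`.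
-/

/-- Column-stacking vectorization of a real matrix: `vec M (j, i) = M i j`. -/
def vec {n p : ℕ} (M : Matrix (Fin n) (Fin p) ℝ) : Fin p × Fin n → ℝ :=
  fun x => M x.2 x.1

theorem vec_eq_matrix_vec {n p : ℕ} (M : Matrix (Fin n) (Fin p) ℝ) :
    _root_.vec M = Matrix.vec M :=
  rfl

section ReluPattern

variable {ι : Type*} [DecidableEq ι]

noncomputable def reluPattern (v : ι → ℝ) : Matrix ι ι ℝ :=
  diagonal fun x => if 0 ≤ v x then 1 else 0

theorem isDiag_reluPattern (v : ι → ℝ) : (reluPattern v).IsDiag :=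
  isDiag_diagonal _

theorem reluPattern_apply_self (v : ι → ℝ) (x : ι) :
    reluPattern v x x = 0 ∨ reluPattern v x x = 1 := by
  rw [reluPattern, diagonal_apply_eq]
  split_ifs <;> simp

variable [Fintype ι]

theorem reluPattern_mulVec_self (v : ι → ℝ) :
    reluPattern v *ᵥ v = fun x => max (v x) 0 := by
  ext x
  rw [reluPattern, mulVec_diagonal]
  split_ifs with h
  · simp [h]
  · simp [(not_le.mp h).le]

theorem vecMul_reluPattern_self (v : ι → ℝ) :
    v ᵥ* reluPattern v = fun x => max (v x) 0 := by
  rw [← reluPattern_mulVec_self, ← vecMul_transpose, reluPattern, diagonal_transpose]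

end ReluPattern

theorem vec_map_relu {m n : Type*} [Fintype m] [Fintype n] [DecidableEq m] [DecidableEq n]
    (M : Matrix m n ℝ) :
    Matrix.vec (M.map fun y => max y 0) = reluPattern (Matrix.vec M) *ᵥ Matrix.vec M := by
  rw [reluPattern_mulVec_self, vec_map]
  rfl

theorem eq_vecMul_prod_range_of_succ {ι R : Type*} [Fintype ι] [DecidableEq ι] [Semiring R]
    (v : ℕ → ι → R) (M : ℕ → Matrix ι ι R) (h : ∀ k, v (k + 1) = v k ᵥ* M k) (k : ℕ) :
    v k = v 0 ᵥ* ((List.range k).map M).prod := by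
  induction k with
  | zero => simp
  | succ k ih =>
    rw [h, ih, List.range_succ, List.map_append, List.prod_append, List.map_singleton,
      List.prod_singleton, vecMul_vecMul]

theorem vec_gin_preactivation {m n R : Type*} [Fintype m] [Fintype n] [DecidableEq m]
    [CommSemiring R] (ε : R) (A : Matrix m m R) (H : Matrix m n R) (W : Matrix n n R) :
    Matrix.vec ((ε • 1 + A) * H * W) = Matrix.vec H ᵥ* (W ⊗ₖ (ε • 1 + Aᵀ)) := by
  rw [vec_vecMul_kronecker, transpose_add, transpose_smul, transpose_one, transpose_transpose]

theorem readout_eq_kronecker_mulVec_vec {m n R : Type*} [Fintype m] [Fintype n] [DecidableEq n]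
    [CommSemiring R] (H : Matrix m n R) (φ : m → R) :
    (fun j : n × Fin 1 => (Hᵀ *ᵥ φ) j.1) =
      ((1 : Matrix n n R) ⊗ₖ replicateRow (Fin 1) φ) *ᵥ Matrix.vec H := by
  rw [← vec_mul_eq_mulVec]
  ext ⟨j, _⟩
  simp [mulVec, dotProduct, mul_apply, mul_comm]

theorem mulVec_eq_sum_smul_col {m n R : Type*} [Fintype n] [CommSemiring R]
    (M : Matrix m n R) (v : n → R) :
    M *ᵥ v = ∑ i, v i • fun j => M j i := by
  rw [← vecMul_transpose, vecMul_eq_sum]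
  rfl

theorem mean_readout_fixed_decoder_general (N D K : ℕ)
    (A : Matrix (Fin N) (Fin N) ℝ) (ε : ℕ → ℝ)
    (W : ℕ → Matrix (Fin D) (Fin D) ℝ)
    (X : Matrix (Fin N) (Fin D) ℝ)
    (H : ℕ → Matrix (Fin N) (Fin D) ℝ)
    (hH0 : H 0 = X)
    (hHk : ∀ k, H (k + 1) =
      ((ε (k + 1) • (1 : Matrix (Fin N) (Fin N) ℝ) + A) * H k * W (k + 1)).map
        (fun y => max y 0)) :
    ∃ S : ℕ → Matrix (Fin D × Fin N) (Fin D × Fin N) ℝ,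
      -- the Σ⁽ᵏ⁾ are diagonal with 0/1 diagonal entries
      (∀ k, (S k).IsDiag ∧ ∀ x, S k x x = 0 ∨ S k x x = 1) ∧
      -- the Σ⁽ᵏ⁾ are the ReLU activation-pattern matrices of the layers
      (∀ k, _root_.vec (H (k + 1)) =
        (S (k + 1)).mulVec
          (_root_.vec ((ε (k + 1) • (1 : Matrix (Fin N) (Fin N) ℝ) + A) * H k * W (k + 1)))) ∧
      -- h_G = Σᵢ ⟨bᵢ(X), vec X⟩ · b̃ᵢ with fixed decoder bases b̃ᵢ given by I_D ⊗ φ_meanᵀ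
      (fun j : Fin D × Fin 1 => (H K)ᵀ.mulVec (fun _ => (N : ℝ)⁻¹) j.1) =
        ∑ i : Fin D × Fin N,
          (∑ r : Fin D × Fin N,
              (((List.range K).map (fun k =>
                  (W (k + 1) ⊗ₖ
                    (ε (k + 1) • (1 : Matrix (Fin N) (Fin N) ℝ) + Aᵀ)) * S (k + 1))).prod)
                r i * _root_.vec X r) •
            (fun j : Fin D × Fin 1 =>
              ((1 : Matrix (Fin D) (Fin D) ℝ) ⊗ₖ
                ((fun (_ : Fin 1) (_ : Fin N) => (N : ℝ)⁻¹) :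
                  Matrix (Fin 1) (Fin N) ℝ)) j i) := by
  simp only [vec_eq_matrix_vec]
  set pre := fun k => (ε (k + 1) • (1 : Matrix (Fin N) (Fin N) ℝ) + A) * H k * W (k + 1)
  set S := fun k => reluPattern (Matrix.vec (pre (k - 1)))
  have hact : ∀ k, Matrix.vec (H (k + 1)) = S (k + 1) *ᵥ Matrix.vec (pre k) := fun k => by
    rw [hHk, vec_map_relu]
    rfl
  have hencoder : ∀ k, Matrix.vec (H k) = Matrix.vec X ᵥ*
      ((List.range k).map fun k => (W (k + 1) ⊗ₖ (ε (k + 1) • 1 + Aᵀ)) * S (k + 1)).prod := by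
    refine hH0 ▸ eq_vecMul_prod_range_of_succ _ _ fun k => ?_
    rw [← vecMul_vecMul, ← vec_gin_preactivation, hHk, vec_map]
    exact (vecMul_reluPattern_self _).symm
  refine ⟨S, fun k => ⟨isDiag_reluPattern _, reluPattern_apply_self _⟩, hact, ?_⟩
  rw [readout_eq_kronecker_mulVec_vec, mulVec_eq_sum_smul_col, hencoder]
  simp only [vecMul, dotProduct, mul_comm]
  rfl

/-- The mean READOUT h_G = (H⁽ᴷ⁾)ᵀ·φ_mean of a K-layer GIN decomposes as
h_G = Σᵢ ⟨bᵢ(X), vec(X)⟩ · b̃ᵢ, where b̃ᵢ is the i-th column of the fixed matrix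
I_D ⊗ φ_meanᵀ (independent of X), and bᵢ(X) is the i-th column of the input-dependent
encoder matrix E⁽¹⁾Σ⁽¹⁾ ⋯ E⁽ᴷ⁾Σ⁽ᴷ⁾, with E⁽ᵏ⁾ = W⁽ᵏ⁾ ⊗ (ε_k·I + Aᵀ) and Σ⁽ᵏ⁾ the 0/1
diagonal ReLU activation-pattern matrices of the layers. -/
theorem mean_readout_fixed_decoder (N D K : ℕ) (hN : 0 < N) (hD : 0 < D) (hK : 0 < K)
    (A : Matrix (Fin N) (Fin N) ℝ) (ε : ℕ → ℝ)
    (W : ℕ → Matrix (Fin D) (Fin D) ℝ)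
    (X : Matrix (Fin N) (Fin D) ℝ)
    (H : ℕ → Matrix (Fin N) (Fin D) ℝ)
    (hH0 : H 0 = X)
    (hHk : ∀ k, H (k + 1) =
      ((ε (k + 1) • (1 : Matrix (Fin N) (Fin N) ℝ) + A) * H k * W (k + 1)).map
        (fun y => max y 0)) :
    ∃ S : ℕ → Matrix (Fin D × Fin N) (Fin D × Fin N) ℝ,
      -- the Σ⁽ᵏ⁾ are diagonal with 0/1 diagonal entries
      (∀ k, (S k).IsDiag ∧ ∀ x, S k x x = 0 ∨ S k x x = 1) ∧
      -- the Σ⁽ᵏ⁾ are the ReLU activation-pattern matrices of the layers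
      (∀ k, _root_.vec (H (k + 1)) =
        (S (k + 1)).mulVec
          (_root_.vec ((ε (k + 1) • (1 : Matrix (Fin N) (Fin N) ℝ) + A) * H k * W (k + 1)))) ∧
      -- h_G = Σᵢ ⟨bᵢ(X), vec X⟩ · b̃ᵢ with fixed decoder bases b̃ᵢ given by I_D ⊗ φ_meanᵀ
      (fun j : Fin D × Fin 1 => (H K)ᵀ.mulVec (fun _ => (N : ℝ)⁻¹) j.1) =
        ∑ i : Fin D × Fin N,
          (∑ r : Fin D × Fin N,
              (((List.range K).map (fun k =>
                  (W (k + 1) ⊗ₖ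
                    (ε (k + 1) • (1 : Matrix (Fin N) (Fin N) ℝ) + Aᵀ)) * S (k + 1))).prod)
                r i * _root_.vec X r) •
            (fun j : Fin D × Fin 1 =>
              ((1 : Matrix (Fin D) (Fin D) ℝ) ⊗ₖ
                ((fun (_ : Fin 1) (_ : Fin N) => (N : ℝ)⁻¹) :
                  Matrix (Fin 1) (Fin N) ℝ)) j i) :=
  mean_readout_fixed_decoder_general N D K A ε W X H hH0 hHk
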